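/- arXiv:1412.8141 — 8 statements merged into one kernel-verified Lean document; each statement's English description precedes it below -/
import Mathlib

section
/- For every bijection b : ℕ → ℤ and every real number C, there exist natural numbers k < ℓ < m such that b(k) − b(ℓ) ≥ C and b(m) = b(k) + 1. -/
/-- For a bijection `b : ℕ → ℤ` and any real `C`, there exist `k < ℓ < m` with
`b k − b ℓ ≥ C` and `b m = b k + 1`. -/
theorem stmt_2 (b : ℕ → ℤ) (hb : Function.Bijective b) (C : ℝ) :
    ∃ k ℓ m : ℕ, k < ℓ ∧ ℓ < m ∧ C ≤ (b k : ℝ) - (b ℓ : ℝ) ∧ b m = b k + 1 := by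
  set D : ℤ := max 1 ⌈C⌉ with hD
  have hD1 : 1 ≤ D := le_max_left _ _
  have hDC : C ≤ (D : ℝ) := le_trans (Int.le_ceil C) (by exact_mod_cast le_max_right 1 ⌈C⌉)
  obtain ⟨ℓ, hℓ⟩ := hb.2 (b 0 - D)
  have hℓlt : b ℓ < b 0 := by omega
  -- k maximizes b on range (ℓ+1)
  obtain ⟨k, hkmem, hkmax⟩ := Finset.exists_max_image (Finset.range (ℓ + 1)) b
    ⟨0, Finset.mem_range.2 (Nat.succ_pos ℓ)⟩
  have hk0 : b 0 ≤ b k := hkmax 0 (Finset.mem_range.2 (Nat.succ_pos ℓ))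
  have hkℓ : k < ℓ := by
    have hkle : k ≤ ℓ := Nat.lt_succ_iff.1 (Finset.mem_range.1 hkmem)
    rcases lt_or_eq_of_le hkle with h | h
    · exact h
    · exfalso; rw [h] at hk0; omega
  obtain ⟨m, hm⟩ := hb.2 (b k + 1)
  have hℓm : ℓ < m := by
    by_contra h
    push_neg at h
    have : b m ≤ b k := hkmax m (Finset.mem_range.2 (Nat.lt_succ_of_le h))
    omega
  refine ⟨k, ℓ, m, hkℓ, hℓm, ?_, hm⟩
  have : D ≤ b k - b ℓ := by omega
  calc C ≤ (D : ℝ) := hDC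
    _ ≤ (b k : ℝ) - (b ℓ : ℝ) := by exact_mod_cast this
end

section
/- Let M ≥ 1 be a real number and let a : ℤ → ℝ be a strictly increasing sequence with a(n) → +∞ as n → +∞ and a(n) → −∞ as n → −∞, satisfying: for all n ∈ ℤ and all integers k ≥ 1, a(n) − a(n−k) ≤ M·(a(n+k) − a(n)) and a(n+k) − a(n) ≤ M·(a(n) − a(n−k)). Define φ : ℝ → ℝ by φ(x) = a(⌊x⌋) + (a(⌊x⌋+1) − a(⌊x⌋))·(x − ⌊x⌋). Then φ(n) = a(n) for every n ∈ ℤ, and φ is C(M)-quasisymmetric with C(M) = M⁴ + M³ + M² + M; that is, for every x ∈ ℝ and every t > 0, φ(x) − φ(x−t) ≤ C(M)·(φ(x+t) − φ(x)) and φ(x+t) − φ(x) ≤ C(M)·(φ(x) − φ(x−t)). -/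
/-!
The interpolation is linear in the sequence and commutes with integer translations, so for an
integer step `k` the differences `φ x - φ (x - k)` and `φ (x + k) - φ x` are the same convex
combinations of the differences of `a`, and the discrete condition passes to `φ` with constant `M`.
A real step `t ≥ 1` lies between `k = ⌊t⌋` and `2k`, and monotonicity together with two integer
steps gives the constant `M² + M`. A step `t ≤ 1` meets at most two adjacent cells on either side
of `x`, whose slopes are within a factor `M` of the slope on the cell of `x`; this gives `M²`.
-/

open Filter Set

def QuasisymmetricOn {G : Type*} [AddGroup G] (C : ℝ) (f : G → ℝ) (S : Set G) : Prop :=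
  ∀ x, ∀ t ∈ S, f x - f (x - t) ≤ C * (f (x + t) - f x) ∧
    f (x + t) - f x ≤ C * (f x - f (x - t))

namespace QuasisymmetricOn

variable {G : Type*} {C D : ℝ} {f : G → ℝ} {S T : Set G}

theorem union [AddGroup G] (hS : QuasisymmetricOn C f S) (hT : QuasisymmetricOn C f T) :
    QuasisymmetricOn C f (S ∪ T) := by
  rintro x t (ht | ht)
  exacts [hS x t ht, hT x t ht]

theorem mono_const [AddCommGroup G] [PartialOrder G] [IsOrderedAddMonoid G]
    (h : QuasisymmetricOn C f S) (hf : Monotone f) (hS : ∀ t ∈ S, 0 ≤ t) (hCD : C ≤ D) :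
    QuasisymmetricOn D f S := by
  intro x t ht
  have hl : 0 ≤ f x - f (x - t) := sub_nonneg.2 (hf (sub_le_self x (hS t ht)))
  have hr : 0 ≤ f (x + t) - f x := sub_nonneg.2 (hf (le_add_of_nonneg_right (hS t ht)))
  obtain ⟨h₁, h₂⟩ := h x t ht
  exact ⟨h₁.trans (by gcongr), h₂.trans (by gcongr)⟩

theorem comp_neg [AddCommGroup G] (h : QuasisymmetricOn C f S) :
    QuasisymmetricOn C (fun x ↦ -f (-x)) S := by
  intro x t ht
  obtain ⟨h₁, h₂⟩ := h (-x) t ht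
  simp only [neg_sub', neg_add', sub_neg_eq_add]
  constructor <;> linarith

end QuasisymmetricOn

noncomputable def piecewiseLinear (a : ℤ → ℝ) (x : ℝ) : ℝ :=
  a ⌊x⌋ + (a (⌊x⌋ + 1) - a ⌊x⌋) * (x - ⌊x⌋)

section piecewiseLinear

variable {a b : ℤ → ℝ}

@[simp]
theorem piecewiseLinear_intCast (a : ℤ → ℝ) (n : ℤ) : piecewiseLinear a n = a n := by
  simp [piecewiseLinear]

theorem piecewiseLinear_add_intCast (a : ℤ → ℝ) (x : ℝ) (k : ℤ) :
    piecewiseLinear a (x + k) = piecewiseLinear (fun n ↦ a (n + k)) x := by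
  simp only [piecewiseLinear, Int.floor_add_intCast, Int.cast_add]
  ring_nf

theorem piecewiseLinear_sub_intCast (a : ℤ → ℝ) (x : ℝ) (k : ℤ) :
    piecewiseLinear a (x - k) = piecewiseLinear (fun n ↦ a (n - k)) x := by
  simpa [← sub_eq_add_neg] using piecewiseLinear_add_intCast a x (-k)

theorem piecewiseLinear_sub (a b : ℤ → ℝ) (x : ℝ) :
    piecewiseLinear (fun n ↦ a n - b n) x = piecewiseLinear a x - piecewiseLinear b x := by
  simp only [piecewiseLinear]
  ring

theorem piecewiseLinear_const_mul (c : ℝ) (a : ℤ → ℝ) (x : ℝ) :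
    piecewiseLinear (fun n ↦ c * a n) x = c * piecewiseLinear a x := by
  simp only [piecewiseLinear]
  ring

theorem piecewiseLinear_le_piecewiseLinear (h : ∀ n, a n ≤ b n) (x : ℝ) :
    piecewiseLinear a x ≤ piecewiseLinear b x := by
  have h₀ : 0 ≤ x - ⌊x⌋ := Int.fract_nonneg x
  have h₁ : x - ⌊x⌋ ≤ 1 := (Int.fract_lt_one x).le
  simp only [piecewiseLinear]
  nlinarith [h ⌊x⌋, h (⌊x⌋ + 1)]

theorem piecewiseLinear_eq_of_mem_Icc (a : ℤ → ℝ) {n : ℤ} {x : ℝ} (hx : x ∈ Icc (n : ℝ) (n + 1)) :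
    piecewiseLinear a x = a n + (a (n + 1) - a n) * (x - n) := by
  rcases hx.2.lt_or_eq with hlt | rfl
  · rw [piecewiseLinear, Int.floor_eq_iff.2 ⟨hx.1, hlt⟩]
  · rw [← Int.cast_one, ← Int.cast_add, piecewiseLinear_intCast]
    push_cast
    ring

theorem Monotone.piecewiseLinear_mem_Icc (ha : Monotone a) (x : ℝ) :
    piecewiseLinear a x ∈ Icc (a ⌊x⌋) (a (⌊x⌋ + 1)) := by
  have h₀ : 0 ≤ x - ⌊x⌋ := Int.fract_nonneg x
  have h₁ : x - ⌊x⌋ ≤ 1 := (Int.fract_lt_one x).le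
  have hd : a ⌊x⌋ ≤ a (⌊x⌋ + 1) := ha (Int.le_add_one le_rfl)
  constructor <;> simp only [piecewiseLinear] <;> nlinarith

theorem monotone_piecewiseLinear (ha : Monotone a) : Monotone (piecewiseLinear a) := by
  intro y z hyz
  rcases (Int.floor_le_floor hyz).lt_or_eq with hlt | heq
  · calc piecewiseLinear a y ≤ a (⌊y⌋ + 1) := (ha.piecewiseLinear_mem_Icc y).2
      _ ≤ a ⌊z⌋ := ha hlt
      _ ≤ piecewiseLinear a z := (ha.piecewiseLinear_mem_Icc z).1
  · have hd : a ⌊y⌋ ≤ a (⌊y⌋ + 1) := ha (Int.le_add_one le_rfl)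
    simp only [piecewiseLinear, ← heq]
    nlinarith

theorem piecewiseLinear_sub_of_mem_Icc (a : ℤ → ℝ) {n : ℤ} {y z : ℝ} (hy : (n : ℝ) ≤ y)
    (hyz : y ≤ z) (hz : z ≤ n + 1) :
    piecewiseLinear a z - piecewiseLinear a y = (a (n + 1) - a n) * (z - y) := by
  rw [piecewiseLinear_eq_of_mem_Icc a ⟨hy.trans hyz, hz⟩,
    piecewiseLinear_eq_of_mem_Icc a ⟨hy, hyz.trans hz⟩]
  ring

theorem piecewiseLinear_sub_mem_Icc {L U : ℝ} {n : ℤ} (h₀ : a (n + 1) - a n ∈ Icc L U)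
    (h₁ : a (n + 2) - a (n + 1) ∈ Icc L U) {y z : ℝ} (hy : (n : ℝ) ≤ y) (hyz : y ≤ z)
    (hz : z ≤ n + 2) :
    piecewiseLinear a z - piecewiseLinear a y ∈ Icc (L * (z - y)) (U * (z - y)) := by
  obtain ⟨hL₀, hU₀⟩ := h₀
  obtain ⟨hL₁, hU₁⟩ := h₁
  have cell₁ : ∀ {y z : ℝ}, (n : ℝ) + 1 ≤ y → y ≤ z → z ≤ n + 2 →
      piecewiseLinear a z - piecewiseLinear a y = (a (n + 2) - a (n + 1)) * (z - y) := by
    intro y z hy hyz hz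
    have := piecewiseLinear_sub_of_mem_Icc a (n := n + 1) (by push_cast; exact hy) hyz
      (by push_cast; linarith)
    rwa [add_assoc, one_add_one_eq_two] at this
  rcases le_total z (n + 1) with hz₁ | hz₁
  · rw [piecewiseLinear_sub_of_mem_Icc a hy hyz hz₁]
    constructor <;> nlinarith
  rcases le_total y (n + 1) with hy₁ | hy₁
  · have e₀ := piecewiseLinear_sub_of_mem_Icc a hy hy₁ le_rfl
    have e₁ := cell₁ le_rfl hz₁ hz
    constructor <;> nlinarith
  · rw [cell₁ hy₁ hyz hz]
    constructor <;> nlinarith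

end piecewiseLinear

namespace QuasisymmetricOn

variable {a : ℤ → ℝ} {f : ℝ → ℝ} {M : ℝ}

theorem piecewiseLinear_intCast (h : QuasisymmetricOn M a (Ici 1)) :
    QuasisymmetricOn M (piecewiseLinear a) (Int.cast '' Ici 1) := by
  rintro x _ ⟨k, hk, rfl⟩
  simp only [piecewiseLinear_add_intCast, piecewiseLinear_sub_intCast, ← piecewiseLinear_sub,
    ← piecewiseLinear_const_mul]
  exact ⟨piecewiseLinear_le_piecewiseLinear (fun n ↦ (h n k hk).1) x,
    piecewiseLinear_le_piecewiseLinear (fun n ↦ (h n k hk).2) x⟩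

theorem piecewiseLinear_Ioc (hM : 1 ≤ M) (ha : Monotone a) (h : QuasisymmetricOn M a (Ici 1)) :
    QuasisymmetricOn (M ^ 2) (piecewiseLinear a) (Ioc 0 1) := by
  rintro x t ⟨ht₀, ht₁⟩
  set n := ⌊x⌋
  set d := a (n + 1) - a n
  have hM₀ : 0 < M := by linarith
  have hd : 0 ≤ d := sub_nonneg.2 (ha (Int.le_add_one le_rfl))
  have slope : ∀ j, a (j + 1) - a j ≤ M * (a j - a (j - 1)) ∧
      a j - a (j - 1) ≤ M * (a (j + 1) - a j) := fun j ↦ (h j 1 (mem_Ici.2 le_rfl)).symm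
  have s₀ : a n - a (n - 1) ∈ Icc (d / M) (M * d) :=
    ⟨(div_le_iff₀' hM₀).2 (slope n).1, (slope n).2⟩
  have s₁ : d ∈ Icc (d / M) (M * d) :=
    ⟨div_le_self hd hM, le_mul_of_one_le_left hd hM⟩
  have s₂ : a (n + 2) - a (n + 1) ∈ Icc (d / M) (M * d) := by
    obtain ⟨h₁, h₂⟩ := slope (n + 1)
    rw [add_sub_cancel_right, add_assoc, one_add_one_eq_two] at h₁ h₂
    exact ⟨(div_le_iff₀' hM₀).2 h₂, h₁⟩
  have hx₀ : (n : ℝ) ≤ x := Int.floor_le x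
  have hx₁ : x < n + 1 := Int.lt_floor_add_one x
  have left := piecewiseLinear_sub_mem_Icc (n := n - 1) (by rwa [sub_add_cancel])
    (by rwa [sub_add_cancel, show n - 1 + 2 = n + 1 by ring])
    (y := x - t) (z := x) (by push_cast; linarith) (by linarith) (by push_cast; linarith)
  have right := piecewiseLinear_sub_mem_Icc s₁ s₂ (y := x) (z := x + t) hx₀ (by linarith)
    (by linarith)
  simp only [sub_sub_cancel, add_sub_cancel_left, mem_Icc] at left right
  have key : M * d * t = M ^ 2 * (d / M * t) := by field_simp
  constructor <;> nlinarith

theorem sub_le_mul_sub_of_one_le (hM : 0 ≤ M) (hf : Monotone f)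
    (h : QuasisymmetricOn M f (Int.cast '' Ici 1)) (x : ℝ) {t : ℝ} (ht : 1 ≤ t) :
    f x - f (x - t) ≤ (M ^ 2 + M) * (f (x + t) - f x) := by
  set k := ⌊t⌋
  have hk : 1 ≤ k := Int.le_floor.2 (by exact_mod_cast ht)
  have hkt : (k : ℝ) ≤ t := Int.floor_le t
  have htk : t ≤ 2 * k := by
    have : t < k + 1 := Int.lt_floor_add_one t
    have : (1 : ℝ) ≤ k := by exact_mod_cast hk
    linarith
  have step₁ := (h (x + k) k ⟨k, hk, rfl⟩).2
  have step₂ := (h x ↑(2 * k) ⟨2 * k, by simp only [mem_Ici]; omega, rfl⟩).1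
  rw [add_sub_cancel_right, add_assoc, ← two_mul] at step₁
  push_cast at step₂
  calc f x - f (x - t) ≤ f x - f (x - 2 * k) := by linarith [hf (by linarith : x - 2 * k ≤ x - t)]
    _ ≤ M * ((f (x + 2 * k) - f (x + k)) + (f (x + k) - f x)) := by linarith
    _ ≤ M * (M * (f (x + k) - f x) + (f (x + k) - f x)) := by gcongr
    _ = (M ^ 2 + M) * (f (x + k) - f x) := by ring
    _ ≤ (M ^ 2 + M) * (f (x + t) - f x) := by
      gcongr
      exact hf (by linarith)

theorem Ici_one_of_intCast (hM : 0 ≤ M) (hf : Monotone f)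
    (h : QuasisymmetricOn M f (Int.cast '' Ici 1)) : QuasisymmetricOn (M ^ 2 + M) f (Ici 1) := by
  intro x t ht
  refine ⟨h.sub_le_mul_sub_of_one_le hM hf x ht, ?_⟩
  have := h.comp_neg.sub_le_mul_sub_of_one_le hM (fun y z hyz ↦ neg_le_neg (hf (neg_le_neg hyz)))
    (-x) ht
  simp only [neg_neg, neg_sub', neg_add', sub_neg_eq_add] at this
  linarith

theorem piecewiseLinear (hM : 1 ≤ M) (ha : Monotone a) (h : QuasisymmetricOn M a (Ici 1)) :
    QuasisymmetricOn (M ^ 2 + M) (piecewiseLinear a) (Ioi 0) := by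
  have hmono := monotone_piecewiseLinear ha
  rw [← Ioc_union_Ici_eq_Ioi zero_lt_one]
  exact ((h.piecewiseLinear_Ioc hM ha).mono_const hmono (fun t ht ↦ ht.1.le) (by nlinarith)).union
    (h.piecewiseLinear_intCast.Ici_one_of_intCast (by linarith) hmono)

end QuasisymmetricOn

theorem stmt_3_general (M : ℝ) (hM : 1 ≤ M) (a : ℤ → ℝ) (ha : StrictMono a)
    (hqs : ∀ n k : ℤ, 1 ≤ k →
      a n - a (n - k) ≤ M * (a (n + k) - a n) ∧
      a (n + k) - a n ≤ M * (a n - a (n - k)))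
    (φ : ℝ → ℝ)
    (hφ : ∀ x : ℝ, φ x = a ⌊x⌋ + (a (⌊x⌋ + 1) - a ⌊x⌋) * (x - ⌊x⌋)) :
    (∀ n : ℤ, φ n = a n) ∧
    ∀ x t : ℝ, 0 < t →
      φ x - φ (x - t) ≤ (M ^ 4 + M ^ 3 + M ^ 2 + M) * (φ (x + t) - φ x) ∧
      φ (x + t) - φ x ≤ (M ^ 4 + M ^ 3 + M ^ 2 + M) * (φ x - φ (x - t)) := by
  obtain rfl : φ = piecewiseLinear a := funext hφ
  refine ⟨piecewiseLinear_intCast a, ?_⟩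
  exact (QuasisymmetricOn.piecewiseLinear hM ha.monotone hqs).mono_const
    (monotone_piecewiseLinear ha.monotone) (fun _ ht ↦ le_of_lt ht)
    (by nlinarith [pow_nonneg (by linarith : (0 : ℝ) ≤ M) 3])

/-- The piecewise linear interpolation `φ` of a two-sided unbounded strictly increasing
sequence `a : ℤ → ℝ` satisfying the discrete `M`-quasisymmetry condition interpolates `a`
at the integers and is `C(M)`-quasisymmetric with `C(M) = M⁴ + M³ + M² + M`. -/
theorem stmt_3 (M : ℝ) (hM : 1 ≤ M) (a : ℤ → ℝ) (ha : StrictMono a)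
    (htop : Tendsto a atTop atTop) (hbot : Tendsto a atBot atBot)
    (hqs : ∀ n k : ℤ, 1 ≤ k →
      a n - a (n - k) ≤ M * (a (n + k) - a n) ∧
      a (n + k) - a n ≤ M * (a n - a (n - k)))
    (φ : ℝ → ℝ)
    (hφ : ∀ x : ℝ, φ x = a ⌊x⌋ + (a (⌊x⌋ + 1) - a ⌊x⌋) * (x - ⌊x⌋)) :
    (∀ n : ℤ, φ n = a n) ∧
    ∀ x t : ℝ, 0 < t →
      φ x - φ (x - t) ≤ (M ^ 4 + M ^ 3 + M ^ 2 + M) * (φ (x + t) - φ x) ∧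
      φ (x + t) - φ x ≤ (M ^ 4 + M ^ 3 + M ^ 2 + M) * (φ x - φ (x - t)) :=
  stmt_3_general M hM a ha hqs φ hφ
end

section
/- Let A ≥ 1 be a real number and let b : ℤ → ℤ be a bijection satisfying the three-point condition with constant A: for all integers n₁ < n₂ < n₃, both |b(n₁) − b(n₂)| ≤ A·|b(n₁) − b(n₃)| and |b(n₂) − b(n₃)| ≤ A·|b(n₁) − b(n₃)|. Then for every n ∈ ℤ, |b(n) − b(n+1)| ≤ 2A. -/
/-- Auxiliary: the case `b n < b (n+1)`. -/
lemma aux_stmt_5 (A : ℝ) (hA : 1 ≤ A) (b : ℤ → ℤ) (hb : Function.Bijective b)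
    (h3pt : ∀ n₁ n₂ n₃ : ℤ, n₁ < n₂ → n₂ < n₃ →
      |(b n₁ : ℝ) - (b n₂ : ℝ)| ≤ A * |(b n₁ : ℝ) - (b n₃ : ℝ)| ∧
      |(b n₂ : ℝ) - (b n₃ : ℝ)| ≤ A * |(b n₁ : ℝ) - (b n₃ : ℝ)|)
    (n : ℤ) (hlt : b n < b (n + 1)) :
    ((b (n + 1) : ℝ) - (b n : ℝ)) ≤ 2 * A := by
  set g : ℤ → ℤ := Function.surjInv hb.surjective with hg
  have hbg : ∀ m : ℤ, b (g m) = m := fun m => Function.surjInv_eq hb.surjective m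
  set d : ℤ := b (n + 1) - b n with hd
  have hd1 : 1 ≤ d := by omega
  have hcast : ((b (n + 1) : ℝ) - (b n : ℝ)) = (d : ℝ) := by push_cast [hd]; ring
  rw [hcast]
  -- trivial case d = 1
  rcases eq_or_lt_of_le hd1 with h1 | hd2
  · rw [← h1]; push_cast; linarith
  -- now d ≥ 2
  have hd2' : 2 ≤ d := hd2
  -- sides: for 1 ≤ t ≤ d - 1, the preimage of b n + t is < n or > n + 1
  have hside : ∀ t : ℤ, 1 ≤ t → t ≤ d - 1 → g (b n + t) < n ∨ n + 1 < g (b n + t) := by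
    intro t ht1 ht2
    have h1 : g (b n + t) ≠ n := by
      intro h
      have := hbg (b n + t)
      rw [h] at this
      omega
    have h2 : g (b n + t) ≠ n + 1 := by
      intro h
      have := hbg (b n + t)
      rw [h] at this
      omega
    omega
  -- key abs computation helper
  have habs : ∀ x : ℤ, 0 ≤ x → |(x : ℝ)| = (x : ℝ) := by
    intro x hx
    exact abs_of_nonneg (by exact_mod_cast hx)
  -- case on preimage of b n + 1
  rcases hside 1 le_rfl (by omega) with hk1 | hk1
  · -- k1 < n ; look at preimage of b n + (d-1)
    rcases hside (d - 1) (by omega) le_rfl with hkd | hkd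
    · -- both near points jump to the left... here preimage of b(n+1) - 1 is < n:
      -- triple (kd, n, n+1): d ≤ A * 1
      have h := (h3pt (g (b n + (d - 1))) n (n + 1) hkd (by omega)).2
      have e1 : (b (g (b n + (d - 1))) : ℝ) = (b n : ℝ) + (d : ℝ) - 1 := by
        rw [hbg]; push_cast; ring
      have e2 : (b (n + 1) : ℝ) = (b n : ℝ) + (d : ℝ) := by push_cast [hd]; ring
      rw [e1, e2] at h
      have ha1 : |(b n : ℝ) - ((b n : ℝ) + (d : ℝ))| = (d : ℝ) := by
        rw [show (b n : ℝ) - ((b n : ℝ) + (d : ℝ)) = -(d : ℝ) by ring, abs_neg,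
          abs_of_nonneg (by exact_mod_cast (by omega : (0:ℤ) ≤ d))]
      have ha2 : |(b n : ℝ) + (d : ℝ) - 1 - ((b n : ℝ) + (d : ℝ))| = 1 := by
        rw [show (b n : ℝ) + (d : ℝ) - 1 - ((b n : ℝ) + (d : ℝ)) = -1 by ring]
        simp
      rw [ha1, ha2] at h
      linarith
    · -- crossing case: k1 < n and kd > n+1
      -- greatest t with 1 ≤ t ≤ d-1 and preimage < n
      obtain ⟨t0, ⟨ht1, ht2, htp⟩, hmax⟩ :=
        Int.exists_greatest_of_bdd (P := fun t => 1 ≤ t ∧ t ≤ d - 1 ∧ g (b n + t) < n)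
          ⟨d - 1, fun z hz => hz.2.1⟩ ⟨1, le_rfl, by omega, hk1⟩
      have ht2' : t0 ≤ d - 2 := by
        rcases eq_or_lt_of_le ht2 with h | h
        · exfalso; rw [h] at htp; omega
        · omega
      set p : ℤ := g (b n + t0) with hp
      set q : ℤ := g (b n + (t0 + 1)) with hq
      have hqgt : n + 1 < q := by
        rcases hside (t0 + 1) (by omega) (by omega) with h | h
        · exfalso
          have := hmax (t0 + 1) ⟨by omega, by omega, h⟩
          omega
        · exact h
      have ep : (b p : ℝ) = (b n : ℝ) + (t0 : ℝ) := by rw [hp, hbg]; push_cast; ring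
      have eq' : (b q : ℝ) = (b n : ℝ) + (t0 : ℝ) + 1 := by rw [hq, hbg]; push_cast; ring
      have en1 : (b (n + 1) : ℝ) = (b n : ℝ) + (d : ℝ) := by push_cast [hd]; ring
      have ht0R : (1 : ℝ) ≤ (t0 : ℝ) := by exact_mod_cast ht1
      have htdR : (t0 : ℝ) ≤ (d : ℝ) - 2 := by
        have : (t0 : ℝ) ≤ ((d - 2 : ℤ) : ℝ) := by exact_mod_cast ht2'
        push_cast at this; linarith
      -- triple (p, n, q): |b n - b q| ≤ A * |b p - b q|  gives t0 + 1 ≤ A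
      have hA1 := (h3pt p n q htp (by omega)).2
      rw [ep, eq'] at hA1
      have a1 : |(b n : ℝ) - ((b n : ℝ) + (t0 : ℝ) + 1)| = (t0 : ℝ) + 1 := by
        rw [show (b n : ℝ) - ((b n : ℝ) + (t0 : ℝ) + 1) = -((t0:ℝ) + 1) by ring, abs_neg,
          abs_of_nonneg (by linarith)]
      have a2 : |(b n : ℝ) + (t0 : ℝ) - ((b n : ℝ) + (t0 : ℝ) + 1)| = 1 := by
        rw [show (b n : ℝ) + (t0 : ℝ) - ((b n : ℝ) + (t0 : ℝ) + 1) = -1 by ring]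
        simp
      rw [a1, a2] at hA1
      -- triple (p, n+1, q): |b p - b (n+1)| ≤ A * |b p - b q| gives d - t0 ≤ A
      have hA2 := (h3pt p (n + 1) q (by omega) hqgt).1
      rw [ep, eq', en1] at hA2
      have a3 : |(b n : ℝ) + (t0 : ℝ) - ((b n : ℝ) + (d : ℝ))| = (d : ℝ) - (t0 : ℝ) := by
        rw [show (b n : ℝ) + (t0 : ℝ) - ((b n : ℝ) + (d : ℝ)) = -((d:ℝ) - t0) by ring, abs_neg,
          abs_of_nonneg (by linarith)]
      rw [a3, a2] at hA2
      linarith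
  · -- k1 > n+1: triple (n, n+1, k1) gives d ≤ A
    have h := (h3pt n (n + 1) (g (b n + 1)) (by omega) hk1).1
    have e1 : (b (g (b n + 1)) : ℝ) = (b n : ℝ) + 1 := by rw [hbg]; push_cast; ring
    have e2 : (b (n + 1) : ℝ) = (b n : ℝ) + (d : ℝ) := by push_cast [hd]; ring
    rw [e1, e2] at h
    have ha1 : |(b n : ℝ) - ((b n : ℝ) + (d : ℝ))| = (d : ℝ) := by
      rw [show (b n : ℝ) - ((b n : ℝ) + (d : ℝ)) = -(d : ℝ) by ring, abs_neg,
        abs_of_nonneg (by exact_mod_cast (by omega : (0:ℤ) ≤ d))]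
    have ha2 : |(b n : ℝ) - ((b n : ℝ) + 1)| = 1 := by
      rw [show (b n : ℝ) - ((b n : ℝ) + 1) = -1 by ring]
      simp
    rw [ha1, ha2] at h
    linarith

/-- Lemma 3.4: a bijection `b : ℤ → ℤ` satisfying the three-point condition with
constant `A` has consecutive gaps bounded by `2A`. -/
theorem stmt_5 (A : ℝ) (hA : 1 ≤ A) (b : ℤ → ℤ) (hb : Function.Bijective b)
    (h3pt : ∀ n₁ n₂ n₃ : ℤ, n₁ < n₂ → n₂ < n₃ →
      |(b n₁ : ℝ) - (b n₂ : ℝ)| ≤ A * |(b n₁ : ℝ) - (b n₃ : ℝ)| ∧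
      |(b n₂ : ℝ) - (b n₃ : ℝ)| ≤ A * |(b n₁ : ℝ) - (b n₃ : ℝ)|) :
    ∀ n : ℤ, |(b n : ℝ) - (b (n + 1) : ℝ)| ≤ 2 * A := by
  intro n
  have hne : b n ≠ b (n + 1) := fun h => by
    have := hb.injective h
    omega
  rcases lt_or_gt_of_ne hne with hlt | hgt
  · have := aux_stmt_5 A hA b hb h3pt n hlt
    rw [abs_sub_comm, abs_of_nonneg (by
      have h : (b n : ℝ) ≤ (b (n + 1) : ℝ) := by exact_mod_cast le_of_lt hlt
      linarith)]
    exact this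
  · -- apply aux to -b
    have hb' : Function.Bijective (fun k => -b k) := by
      constructor
      · intro x y h
        simp only [neg_inj] at h
        exact hb.injective h
      · intro m
        obtain ⟨k, hk⟩ := hb.surjective (-m)
        exact ⟨k, by simp [hk]⟩
    have h3pt' : ∀ n₁ n₂ n₃ : ℤ, n₁ < n₂ → n₂ < n₃ →
        |((fun k => -b k) n₁ : ℝ) - ((fun k => -b k) n₂ : ℝ)| ≤
          A * |((fun k => -b k) n₁ : ℝ) - ((fun k => -b k) n₃ : ℝ)| ∧
        |((fun k => -b k) n₂ : ℝ) - ((fun k => -b k) n₃ : ℝ)| ≤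
          A * |((fun k => -b k) n₁ : ℝ) - ((fun k => -b k) n₃ : ℝ)| := by
      intro n₁ n₂ n₃ h12 h23
      have h := h3pt n₁ n₂ n₃ h12 h23
      simp only []
      constructor
      · calc |((-b n₁ : ℤ) : ℝ) - ((-b n₂ : ℤ) : ℝ)| = |(b n₁ : ℝ) - (b n₂ : ℝ)| := by
              push_cast; rw [show -(b n₁ : ℝ) - -(b n₂ : ℝ) = -((b n₁ : ℝ) - b n₂) by ring, abs_neg]
          _ ≤ A * |(b n₁ : ℝ) - (b n₃ : ℝ)| := h.1
          _ = A * |((-b n₁ : ℤ) : ℝ) - ((-b n₃ : ℤ) : ℝ)| := by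
              push_cast
              rw [show -(b n₁ : ℝ) - -(b n₃ : ℝ) = -((b n₁ : ℝ) - b n₃) by ring, abs_neg]
      · calc |((-b n₂ : ℤ) : ℝ) - ((-b n₃ : ℤ) : ℝ)| = |(b n₂ : ℝ) - (b n₃ : ℝ)| := by
              push_cast; rw [show -(b n₂ : ℝ) - -(b n₃ : ℝ) = -((b n₂ : ℝ) - b n₃) by ring, abs_neg]
          _ ≤ A * |(b n₁ : ℝ) - (b n₃ : ℝ)| := h.2
          _ = A * |((-b n₁ : ℤ) : ℝ) - ((-b n₃ : ℤ) : ℝ)| := by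
              push_cast
              rw [show -(b n₁ : ℝ) - -(b n₃ : ℝ) = -((b n₁ : ℝ) - b n₃) by ring, abs_neg]
    have hlt' : (fun k => -b k) n < (fun k => -b k) (n + 1) := by simp; omega
    have := aux_stmt_5 A hA (fun k => -b k) hb' h3pt' n hlt'
    push_cast at this
    rw [abs_of_nonneg (by
      have : (b (n+1) : ℝ) ≤ (b n : ℝ) := by exact_mod_cast le_of_lt hgt
      linarith)]
    linarith
end

section
/- Let A ≥ 1 be a real number and let b : ℤ → ℤ be a bijection satisfying the three-point condition with constant A: for all integers n₁ < n₂ < n₃, both |b(n₁) − b(n₂)| ≤ A·|b(n₁) − b(n₃)| and |b(n₂) − b(n₃)| ≤ A·|b(n₁) − b(n₃)|. Then for every n ∈ ℤ and every integer k ≥ 2, (k−1)/(2A) ≤ |b(n) − b(n+k)| ≤ 2A·k. -/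
theorem aux_key_stmt6 (A : ℝ) (hA : 1 ≤ A) (b : ℤ → ℤ) (hb : Function.Bijective b)
    (h3pt : ∀ n₁ n₂ n₃ : ℤ, n₁ < n₂ → n₂ < n₃ →
      |(b n₁ : ℝ) - (b n₂ : ℝ)| ≤ A * |(b n₁ : ℝ) - (b n₃ : ℝ)| ∧
      |(b n₂ : ℝ) - (b n₃ : ℝ)| ≤ A * |(b n₁ : ℝ) - (b n₃ : ℝ)|)
    (n k : ℤ) (hk : 2 ≤ k) (hlt : b n < b (n + k)) :
    ((k : ℝ) - 1) / (2 * A) ≤ |(b n : ℝ) - (b (n + k) : ℝ)| ∧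
      |(b n : ℝ) - (b (n + k) : ℝ)| ≤ 2 * A * (k : ℝ) := by
  have hA0 : (0:ℝ) < A := by linarith
  have hkR : (2:ℝ) ≤ (k:ℝ) := by exact_mod_cast hk
  obtain ⟨D, hD⟩ : ∃ D : ℤ, b (n + k) = b n + D := ⟨b (n + k) - b n, by ring⟩
  have hD1 : 1 ≤ D := by omega
  have hDR : (1:ℝ) ≤ (D:ℝ) := by exact_mod_cast hD1
  have hq_r : (b (n + k) : ℝ) = (b n : ℝ) + (D : ℝ) := by exact_mod_cast hD
  have habs : |(b n : ℝ) - (b (n + k) : ℝ)| = (D : ℝ) := by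
    rw [hq_r, show (b n : ℝ) - ((b n : ℝ) + (D:ℝ)) = -(D:ℝ) by ring, abs_neg,
      abs_of_pos (by linarith)]
  -- lower bound
  have hmem : ∀ j ∈ Finset.Icc n (n + k),
      b j ∈ Finset.Icc (b n - ⌊A * (D:ℝ)⌋) (b n + ⌊A * (D:ℝ)⌋) := by
    intro j hj
    rw [Finset.mem_Icc] at hj ⊢
    have habsj : |(b j : ℝ) - (b n : ℝ)| ≤ A * (D:ℝ) := by
      rcases eq_or_lt_of_le hj.1 with h1 | h1
      · rw [← h1]
        simp only [sub_self, abs_zero]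
        nlinarith
      · rcases eq_or_lt_of_le hj.2 with h2 | h2
        · rw [h2, hq_r, show (b n:ℝ) + (D:ℝ) - (b n:ℝ) = (D:ℝ) by ring,
            abs_of_pos (by linarith)]
          nlinarith
        · have h3 := (h3pt n j (n + k) h1 h2).1
          rw [abs_sub_comm (b n : ℝ) (b j : ℝ), habs] at h3
          exact h3
    obtain ⟨hl, hr⟩ := abs_le.mp habsj
    have e1 : b j - b n ≤ ⌊A * (D:ℝ)⌋ := Int.le_floor.mpr (by push_cast; linarith)
    have e2 : b n - b j ≤ ⌊A * (D:ℝ)⌋ := Int.le_floor.mpr (by push_cast; linarith)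
    omega
  have hinj : Set.InjOn b (Finset.Icc n (n + k)) := fun x _ y _ h => hb.injective h
  have hcard := Finset.card_le_card_of_injOn b hmem hinj
  rw [Int.card_Icc, Int.card_Icc] at hcard
  have hk2 : (k:ℤ) ≤ 2 * ⌊A * (D:ℝ)⌋ := by omega
  have hkAD : (k:ℝ) ≤ 2 * (A * (D:ℝ)) := by
    have hfl := Int.floor_le (A * (D:ℝ))
    have h2 : ((k:ℤ):ℝ) ≤ ((2 * ⌊A * (D:ℝ)⌋ : ℤ):ℝ) := by exact_mod_cast hk2
    push_cast at h2
    linarith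
  -- ascent lemma: no value b n + t with t > A has preimage left of n
  have Lasc : ∀ j : ℕ, ∀ t : ℤ, A < (t:ℝ) → t + (j:ℤ) = D →
      (∃ m, m < n ∧ b m = b n + t) → False := by
    intro j
    induction j with
    | zero =>
      intro t hAt ht hex
      obtain ⟨m, hmn, hbm⟩ := hex
      push_cast at ht
      have htD : t = D := by omega
      rw [htD] at hbm
      have : m = n + k := hb.injective (hbm.trans hD.symm)
      omega
    | succ j ih =>
      intro t hAt ht hex
      obtain ⟨m, hmn, hbm⟩ := hex
      obtain ⟨m', hm'⟩ := hb.surjective (b n + (t + 1))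
      rcases lt_trichotomy m' n with h | h | h
      · refine ih (t + 1) (by push_cast; linarith) (by push_cast at ht ⊢; omega)
          ⟨m', h, hm'⟩
      · rw [h] at hm'
        have ht1 : t = -1 := by omega
        rw [ht1] at hAt
        norm_num at hAt
        linarith
      · have h3 := (h3pt m n m' hmn h).1
        have hm_r : (b m : ℝ) = (b n : ℝ) + (t:ℝ) := by exact_mod_cast hbm
        have hm'_r : (b m' : ℝ) = (b n : ℝ) + ((t:ℝ) + 1) := by exact_mod_cast hm'
        rw [hm_r, hm'_r,
          show (b n : ℝ) + (t:ℝ) - (b n : ℝ) = (t:ℝ) by ring,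
          show (b n : ℝ) + (t:ℝ) - ((b n : ℝ) + ((t:ℝ) + 1)) = -1 by ring] at h3
        rw [abs_neg, abs_one, mul_one] at h3
        have := le_abs_self (t:ℝ)
        linarith
  -- descent lemma: no value b n + t with D - t > A has preimage right of n + k
  have Rdesc : ∀ j : ℕ, ∀ t : ℤ, A < (D:ℝ) - (t:ℝ) → t = (j:ℤ) →
      (∃ m, n + k < m ∧ b m = b n + t) → False := by
    intro j
    induction j with
    | zero =>
      intro t h1 ht hex
      obtain ⟨m, hm, hbm⟩ := hex
      push_cast at ht
      have ht0 : t = 0 := by omega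
      rw [ht0, add_zero] at hbm
      have : m = n := hb.injective hbm
      omega
    | succ j ih =>
      intro t h1 ht hex
      obtain ⟨m, hm, hbm⟩ := hex
      obtain ⟨m', hm'⟩ := hb.surjective (b n + (t - 1))
      rcases lt_trichotomy m' (n + k) with h | h | h
      · have h3 := (h3pt m' (n + k) m h hm).2
        have hm_r : (b m : ℝ) = (b n : ℝ) + (t:ℝ) := by exact_mod_cast hbm
        have hm'_r : (b m' : ℝ) = (b n : ℝ) + ((t:ℝ) - 1) := by exact_mod_cast hm'
        rw [hq_r, hm_r, hm'_r,
          show (b n : ℝ) + (D:ℝ) - ((b n : ℝ) + (t:ℝ)) = (D:ℝ) - (t:ℝ) by ring,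
          show (b n : ℝ) + ((t:ℝ) - 1) - ((b n : ℝ) + (t:ℝ)) = -1 by ring] at h3
        rw [abs_neg, abs_one, mul_one] at h3
        have := le_abs_self ((D:ℝ) - (t:ℝ))
        linarith
      · rw [h] at hm'
        have hdt : D - t = -1 := by omega
        have h5 : ((D - t : ℤ):ℝ) = -1 := by rw [hdt]; norm_num
        push_cast at h5
        rw [show (D:ℝ) - (t:ℝ) = -1 from by linarith] at h1
        linarith
      · refine ih (t - 1) (by push_cast; linarith)
          (by push_cast at ht ⊢; omega) ⟨m', h, hm'⟩
  -- counting the middle values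
  have hAf1 : (⌊A⌋:ℝ) ≤ A := Int.floor_le A
  have hAf2 : A < (⌊A⌋:ℝ) + 1 := Int.lt_floor_add_one A
  have hAf0 : 1 ≤ ⌊A⌋ := Int.le_floor.mpr (by norm_num; linarith)
  have hsub : Finset.Icc (⌊A⌋ + 1) (D - ⌊A⌋ - 1) ⊆
      Finset.image (fun j => b j - b n) (Finset.Ioo n (n + k)) := by
    intro t ht
    rw [Finset.mem_Icc] at ht
    have hAt : A < (t:ℝ) := by
      have : ((⌊A⌋ + 1 : ℤ):ℝ) ≤ (t:ℝ) := by exact_mod_cast ht.1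
      push_cast at this
      linarith
    have htD : (t:ℝ) < (D:ℝ) - A := by
      have : (t:ℝ) ≤ ((D - ⌊A⌋ - 1 : ℤ):ℝ) := by exact_mod_cast ht.2
      push_cast at this
      linarith
    obtain ⟨m, hm⟩ := hb.surjective (b n + t)
    rcases lt_trichotomy m n with h | h | h
    · exact absurd ⟨m, h, hm⟩ (Lasc (D - t).toNat t hAt (by omega))
    · rw [h] at hm
      have : t = 0 := by omega
      rw [this] at hAt
      push_cast at hAt
      linarith
    · rcases lt_trichotomy m (n + k) with h2 | h2 | h2
      · exact Finset.mem_image.mpr ⟨m, Finset.mem_Ioo.mpr ⟨h, h2⟩, by omega⟩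
      · exfalso
        rw [h2] at hm
        have htD2 : t = D := by omega
        rw [htD2] at htD
        linarith
      · exact absurd ⟨m, h2, hm⟩ (Rdesc t.toNat t (by linarith) (by omega))
  have hcard2 := Finset.card_le_card hsub
  have hcard3 := Finset.card_image_le (f := fun j => b j - b n) (s := Finset.Ioo n (n + k))
  rw [Int.card_Icc] at hcard2
  rw [Int.card_Ioo] at hcard3
  have hDk : D ≤ k + 2 * ⌊A⌋ := by
    have := hcard2.trans hcard3
    omega
  have hDkR : (D:ℝ) ≤ (k:ℝ) + 2 * A := by
    have : ((D:ℤ):ℝ) ≤ ((k + 2 * ⌊A⌋ : ℤ):ℝ) := by exact_mod_cast hDk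
    push_cast at this
    linarith
  constructor
  · rw [habs, div_le_iff₀ (by linarith : (0:ℝ) < 2 * A)]
    nlinarith
  · rw [habs]
    nlinarith [mul_nonneg (by linarith : (0:ℝ) ≤ 2 * A - 1) (by linarith : (0:ℝ) ≤ (k:ℝ) - 2)]

/-- Lemma 3.5: a bijection `b : ℤ → ℤ` satisfying the three-point condition with
constant `A` satisfies `(k−1)/(2A) ≤ |b n − b (n+k)| ≤ 2Ak` for all `n` and `k ≥ 2`. -/
theorem stmt_6 (A : ℝ) (hA : 1 ≤ A) (b : ℤ → ℤ) (hb : Function.Bijective b)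
    (h3pt : ∀ n₁ n₂ n₃ : ℤ, n₁ < n₂ → n₂ < n₃ →
      |(b n₁ : ℝ) - (b n₂ : ℝ)| ≤ A * |(b n₁ : ℝ) - (b n₃ : ℝ)| ∧
      |(b n₂ : ℝ) - (b n₃ : ℝ)| ≤ A * |(b n₁ : ℝ) - (b n₃ : ℝ)|) :
    ∀ n k : ℤ, 2 ≤ k →
      ((k : ℝ) - 1) / (2 * A) ≤ |(b n : ℝ) - (b (n + k) : ℝ)| ∧
      |(b n : ℝ) - (b (n + k) : ℝ)| ≤ 2 * A * (k : ℝ) := by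
  intro n k hk
  rcases lt_trichotomy (b n) (b (n + k)) with h | h | h
  · exact aux_key_stmt6 A hA b hb h3pt n k hk h
  · exfalso
    have := hb.injective h
    omega
  · have hb' : Function.Bijective (fun j => -b j) := by
      constructor
      · intro x y hxy
        exact hb.injective (neg_inj.mp hxy)
      · intro y
        obtain ⟨x, hx⟩ := hb.surjective (-y)
        exact ⟨x, by simp [hx]⟩
    have habsneg : ∀ x y : ℝ, |(-x) - (-y)| = |x - y| := fun x y => by
      rw [show (-x) - (-y) = -(x - y) by ring, abs_neg]
    have h3pt' : ∀ n₁ n₂ n₃ : ℤ, n₁ < n₂ → n₂ < n₃ →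
        |((fun j => -b j) n₁ : ℝ) - ((fun j => -b j) n₂ : ℝ)| ≤
          A * |((fun j => -b j) n₁ : ℝ) - ((fun j => -b j) n₃ : ℝ)| ∧
        |((fun j => -b j) n₂ : ℝ) - ((fun j => -b j) n₃ : ℝ)| ≤
          A * |((fun j => -b j) n₁ : ℝ) - ((fun j => -b j) n₃ : ℝ)| := by
      intro n₁ n₂ n₃ h1 h2
      have h0 := h3pt n₁ n₂ n₃ h1 h2
      dsimp only
      push_cast
      rw [habsneg, habsneg, habsneg]
      exact h0
    have hlt' : (fun j => -b j) n < (fun j => -b j) (n + k) := by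
      dsimp only
      omega
    have hres := aux_key_stmt6 A hA _ hb' h3pt' n k hk hlt'
    have e2 : |((-b n : ℤ):ℝ) - ((-b (n + k) : ℤ):ℝ)| = |(b n : ℝ) - (b (n + k) : ℝ)| := by
      push_cast
      rw [habsneg]
    rw [e2] at hres
    exact hres
end

section
/- Let A ≥ 1 be a real number and let b : ℤ → ℤ be a bijection satisfying the three-point condition with constant A: for all integers n₁ < n₂ < n₃, both |b(n₁) − b(n₂)| ≤ A·|b(n₁) − b(n₃)| and |b(n₂) − b(n₃)| ≤ A·|b(n₁) − b(n₃)|. Then with L = 8A², for every n ∈ ℤ and every integer k ≥ 1, |b(n) − b(n−k)| ≤ L·|b(n+k) − b(n)| and |b(n+k) − b(n)| ≤ L·|b(n) − b(n−k)|. -/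
/-!
Two estimates for a bijection `b : ℤ → ℤ` with the three-point condition and `i ≤ j`:

* by injectivity, the `j - i + 1` distinct values `b i, …, b j` lie within `A |b j - b i|` of
  `b i`, so `j - i ≤ 2A |b j - b i|`;
* by surjectivity, `|b j - b i| ≤ A (j - i + A)`. Say `b i < b j` and `b j - b i > A²`. Every
  integer in `(b i + A, b i + (b j - b i) / A)` is some `b q`; `q > j` would contradict the
  condition on `(i, j, q)`, and `q < i` is impossible because the values in `(b i, b j)` attained
  before `i` stay within `A` of `b i`: at the largest of them, `v = b p`, the neighbour
  `v + 1 = b q` has `i < q < j` or `j < q`, and the condition on `(p, i, q)` resp. `(p, j, q)`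
  bounds `|v - b i|` resp. `|v - b j|` by `A |v - (v + 1)| = A`. So these integers need distinct
  indices strictly between `i` and `j`.

Comparing the two estimates at equal index spans bounds the ratio by `3A² ≤ 8A²`.
-/

open Set Function

namespace Int

theorem sub_le_two_mul_of_injOn {f : ℤ → ℤ} {a b c : ℤ} {r : ℝ} (hab : a ≤ b)
    (hf : InjOn f (Icc a b)) (hr : ∀ j ∈ Icc a b, |(f j : ℝ) - c| ≤ r) :
    (b - a : ℝ) ≤ 2 * r := by
  have hmaps : MapsTo f (Finset.Icc a b) (Finset.Icc (c - ⌊r⌋) (c + ⌊r⌋)) := by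
    intro j hj
    have hj : |f j - c| ≤ ⌊r⌋ := by
      rw [Int.le_floor]
      exact_mod_cast hr j (by simpa using hj)
    simp only [Finset.coe_Icc, mem_Icc]
    constructor <;> linarith [abs_le.mp hj]
  have hcard := Finset.card_le_card_of_injOn f hmaps (by simpa using hf)
  rw [Int.card_Icc, Int.card_Icc] at hcard
  have : ((b - a : ℤ) : ℝ) ≤ 2 * ⌊r⌋ := by exact_mod_cast (show b - a ≤ 2 * ⌊r⌋ by omega)
  push_cast at this
  linarith [Int.floor_le r]

theorem sub_le_sub_of_surjOn {f : ℤ → ℤ} {a b c d : ℤ} (hab : a ≤ b)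
    (hf : SurjOn f (Icc c d) (Icc a b)) : b - a ≤ d - c := by
  have hsub : Finset.Icc a b ⊆ (Finset.Icc c d).image f := by
    intro m hm
    obtain ⟨j, hj, rfl⟩ := hf (by simpa using hm)
    exact Finset.mem_image_of_mem f (by simpa using hj)
  have hcard := (Finset.card_le_card hsub).trans Finset.card_image_le
  rw [Int.card_Icc, Int.card_Icc] at hcard
  omega

end Int

def ThreePoint (A : ℝ) (b : ℤ → ℤ) : Prop :=
  ∀ ⦃i j l : ℤ⦄, i < j → j < l →
    |(b i : ℝ) - b j| ≤ A * |(b i : ℝ) - b l| ∧ |(b j : ℝ) - b l| ≤ A * |(b i : ℝ) - b l|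

namespace ThreePoint

variable {A : ℝ} {b : ℤ → ℤ}

theorem neg (h : ThreePoint A b) : ThreePoint A (-b) := by
  intro i j l hij hjl
  simpa only [Pi.neg_apply, Int.cast_neg, neg_sub_neg, abs_sub_comm] using h hij hjl

theorem abs_sub_le_of_le_of_le (h : ThreePoint A b) (hA : 1 ≤ A) {i j l : ℤ}
    (hij : i ≤ j) (hjl : j ≤ l) : |(b j : ℝ) - b i| ≤ A * |(b l : ℝ) - b i| := by
  rcases hij.eq_or_lt with rfl | hij
  · simp only [sub_self, abs_zero]
    exact mul_nonneg (by linarith) (abs_nonneg _)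
  rcases hjl.eq_or_lt with rfl | hjl
  · exact le_mul_of_one_le_left (abs_nonneg _) hA
  simpa only [abs_sub_comm] using (h hij hjl).1

theorem sub_le_two_mul_abs (h : ThreePoint A b) (hA : 1 ≤ A) (hb : Injective b) {i l : ℤ}
    (hil : i ≤ l) : (l - i : ℝ) ≤ 2 * (A * |(b l : ℝ) - b i|) :=
  Int.sub_le_two_mul_of_injOn hil hb.injOn fun _ hj => h.abs_sub_le_of_le_of_le hA hj.1 hj.2

theorem sub_le_of_lt_of_mem_Ioo (h : ThreePoint A b) (hA : 1 ≤ A) (hb : Surjective b) {i j p : ℤ}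
    (hij : i < j) (hx : A ^ 2 < (b j : ℝ) - b i) (hpi : p < i) (hbp : b p ∈ Ioo (b i) (b j)) :
    (b p : ℝ) - b i ≤ A := by
  obtain ⟨hp, hpj⟩ := hbp
  obtain ⟨v, ⟨hiv, hvj, p', hp'i, rfl⟩, hvmax⟩ := Int.exists_greatest_of_bdd
    (P := fun m => b i < m ∧ m < b j ∧ ∃ p' < i, b p' = m)
    ⟨b j, fun _ hm => hm.2.1.le⟩ ⟨b p, hp, hpj, p, hpi, rfl⟩
  have hpv : b p ≤ b p' := hvmax _ ⟨hp, hpj, p, hpi, rfl⟩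
  suffices (b p' : ℝ) - b i ≤ A by
    have : (b p : ℝ) ≤ b p' := by exact_mod_cast hpv
    linarith
  have hfar : (b j : ℝ) - b i ≤ A * ((b j : ℝ) - b p') := by
    have := (h hp'i hij).2
    have hij' : (b i : ℝ) < b j := by linarith [sq_nonneg A]
    rwa [abs_sub_comm, abs_of_pos (by linarith), abs_sub_comm,
      abs_of_pos (by exact_mod_cast sub_pos.mpr hvj)] at this
  have hnear : (b j : ℝ) - b p' > A := by nlinarith
  obtain ⟨q, hq⟩ := hb (b p' + 1)
  have hunit : |(b p' : ℝ) - b q| = 1 := by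
    rw [hq]; push_cast; norm_num
  have hqj : b q < b j := by
    by_contra! hjq
    have : (b j : ℝ) - b p' ≤ 1 := by exact_mod_cast (show b j - b p' ≤ 1 by omega)
    linarith
  rcases lt_trichotomy q i with hqi | rfl | hiq
  · exact absurd (hvmax (b p' + 1) ⟨by omega, hq ▸ hqj, q, hqi, hq⟩) (by omega)
  · omega
  rcases lt_trichotomy q j with hqj' | rfl | hjq
  · have := (h hp'i hiq).1
    rw [hunit, mul_one, abs_le] at this
    linarith [this.1]
  · omega
  · have := (h (hp'i.trans hij) hjq).1
    rw [hunit, mul_one, abs_le] at this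
    linarith [this.1]

theorem sub_le_mul_of_lt (h : ThreePoint A b) (hA : 1 ≤ A) (hb : Surjective b) {i j : ℤ}
    (hij : i < j) (hlt : b i < b j) : (b j : ℝ) - b i ≤ A * (j - i + A) := by
  by_contra! hx
  have hji : (1 : ℝ) ≤ j - i := by exact_mod_cast (show (1 : ℤ) ≤ j - i by omega)
  have hlt' : (b i : ℝ) < b j := by exact_mod_cast hlt
  have hA2 : A ^ 2 < (b j : ℝ) - b i := by nlinarith
  have hsurj : SurjOn b (Icc (i + 1) (j - 1)) (Icc (b i + ⌊A⌋ + 1) (b i + ⌊A⌋ + (j - i))) := by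
    rintro m ⟨hm₁, hm₂⟩
    obtain ⟨q, rfl⟩ := hb m
    have hlo : A < (b q : ℝ) - b i := by
      have : ((b i + ⌊A⌋ + 1 : ℤ) : ℝ) ≤ b q := by exact_mod_cast hm₁
      push_cast at this
      linarith [Int.lt_floor_add_one A]
    have hhi : (b q : ℝ) - b i ≤ A + (j - i) := by
      have : (b q : ℝ) ≤ ((b i + ⌊A⌋ + (j - i) : ℤ) : ℝ) := by exact_mod_cast hm₂
      push_cast at this
      linarith [Int.floor_le A]
    have hqj : b q < b j := by
      have : (b q : ℝ) < b j := by nlinarith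
      exact_mod_cast this
    have hiq : b i < b q := by
      have : (b i : ℝ) < b q := by linarith
      exact_mod_cast this
    rcases lt_trichotomy q i with hqi | rfl | hiq'
    · linarith [h.sub_le_of_lt_of_mem_Ioo hA hb hij hA2 hqi ⟨hiq, hqj⟩]
    · omega
    rcases lt_trichotomy q j with hqj' | rfl | hjq
    · exact ⟨q, ⟨by omega, by omega⟩, rfl⟩
    · omega
    · have := (h hij hjq).1
      rw [abs_sub_comm, abs_of_pos (by linarith), abs_sub_comm, abs_of_pos (by linarith)] at this
      nlinarith
  have := Int.sub_le_sub_of_surjOn (by omega) hsurj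
  omega

theorem abs_sub_le_mul (h : ThreePoint A b) (hA : 1 ≤ A) (hb : Surjective b) {i j : ℤ}
    (hij : i ≤ j) : |(b j : ℝ) - b i| ≤ A * (j - i + A) := by
  have hji : (0 : ℝ) ≤ j - i := sub_nonneg.mpr (by exact_mod_cast hij)
  rcases lt_trichotomy (b i) (b j) with hlt | heq | hgt
  · rw [abs_of_pos (by exact_mod_cast sub_pos.mpr hlt)]
    exact h.sub_le_mul_of_lt hA hb (hij.lt_of_ne (by rintro rfl; exact hlt.false)) hlt
  · rw [heq, sub_self, abs_zero]
    exact mul_nonneg (by linarith) (by linarith)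
  · have hneg := h.neg.sub_le_mul_of_lt hA (neg_surjective.comp hb)
      (hij.lt_of_ne (by rintro rfl; exact hgt.false)) (by simpa using hgt)
    rw [abs_of_neg (by exact_mod_cast sub_neg.mpr hgt)]
    simp only [Pi.neg_apply, Int.cast_neg] at hneg
    linarith

theorem abs_sub_le_three_mul_sq_mul_abs (h : ThreePoint A b) (hA : 1 ≤ A) (hb : Bijective b)
    {i j m l : ℤ} (hij : i ≤ j) (hml : m < l) (hgap : j - i ≤ l - m) :
    |(b j : ℝ) - b i| ≤ 3 * A ^ 2 * |(b l : ℝ) - b m| := by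
  have hy : (1 : ℝ) ≤ |(b l : ℝ) - b m| := by
    exact_mod_cast Int.one_le_abs (sub_ne_zero.mpr (hb.1.ne hml.ne'))
  have hgap' : (j - i : ℝ) ≤ l - m := by exact_mod_cast hgap
  calc |(b j : ℝ) - b i| ≤ A * (j - i + A) := h.abs_sub_le_mul hA hb.2 hij
    _ ≤ A * (2 * (A * |(b l : ℝ) - b m|) + A) := by
      gcongr
      exact hgap'.trans (h.sub_le_two_mul_abs hA hb.1 hml.le)
    _ ≤ 3 * A ^ 2 * |(b l : ℝ) - b m| := by nlinarith

end ThreePoint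

/-- Proposition 3.3 (combinatorial form): a bijection `b : ℤ → ℤ` satisfying the
three-point condition with constant `A` has symmetric gap ratios bounded by `L = 8A²`. -/
theorem stmt_7 (A : ℝ) (hA : 1 ≤ A) (b : ℤ → ℤ) (hb : Function.Bijective b)
    (h3pt : ∀ n₁ n₂ n₃ : ℤ, n₁ < n₂ → n₂ < n₃ →
      |(b n₁ : ℝ) - (b n₂ : ℝ)| ≤ A * |(b n₁ : ℝ) - (b n₃ : ℝ)| ∧
      |(b n₂ : ℝ) - (b n₃ : ℝ)| ≤ A * |(b n₁ : ℝ) - (b n₃ : ℝ)|) :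
    ∀ n k : ℤ, 1 ≤ k →
      |(b n : ℝ) - (b (n - k) : ℝ)| ≤ 8 * A ^ 2 * |(b (n + k) : ℝ) - (b n : ℝ)| ∧
      |(b (n + k) : ℝ) - (b n : ℝ)| ≤ 8 * A ^ 2 * |(b n : ℝ) - (b (n - k) : ℝ)| := by
  intro n k hk
  have h : ThreePoint A b := h3pt
  have key (i j m l : ℤ) (hij : i ≤ j) (hml : m < l) (hgap : j - i ≤ l - m) :
      |(b j : ℝ) - b i| ≤ 8 * A ^ 2 * |(b l : ℝ) - b m| :=
    (h.abs_sub_le_three_mul_sq_mul_abs hA hb hij hml hgap).trans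
      (mul_le_mul_of_nonneg_right (by nlinarith) (abs_nonneg _))
  exact ⟨key (n - k) n n (n + k) (by omega) (by omega) (by omega),
    key n (n + k) (n - k) n (by omega) (by omega) (by omega)⟩
end

section
/- The set E₁ = { m + i·2^n : m ∈ ℤ, n ∈ ℕ ∪ {0} } ⊂ ℂ is 8-porous in ℂ: for every z' ∈ ℂ and every r > 0, there exists a point z in the closed disk of radius r centered at z' such that the open disk of radius r/8 centered at z is disjoint from E₁. -/
/-- For `y ≥ 1` there is a dyadic scale `k` with `2^k ≤ y < 2^(k+1)`. -/
lemma dyadic_scale (y : ℝ) (hy : 1 ≤ y) :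
    ∃ k : ℕ, (2 : ℝ) ^ k ≤ y ∧ y < 2 ^ (k + 1) := by
  set k := Nat.log 2 ⌊y⌋₊ with hk
  have h1 : 1 ≤ ⌊y⌋₊ := Nat.one_le_floor_iff y |>.mpr hy
  have hlow : 2 ^ k ≤ ⌊y⌋₊ := Nat.pow_log_le_self 2 (by omega)
  have hhigh : ⌊y⌋₊ < 2 ^ (k + 1) := Nat.lt_pow_succ_log_self (by norm_num) _
  refine ⟨k, ?_, ?_⟩
  · calc (2 : ℝ) ^ k = ((2 ^ k : ℕ) : ℝ) := by push_cast; ring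
    _ ≤ (⌊y⌋₊ : ℝ) := by exact_mod_cast hlow
    _ ≤ y := Nat.floor_le (by linarith)
  · have : y < (⌊y⌋₊ : ℝ) + 1 := Nat.lt_floor_add_one y
    have h2 : (⌊y⌋₊ : ℝ) + 1 ≤ ((2 ^ (k + 1) : ℕ) : ℝ) := by exact_mod_cast hhigh
    calc y < (⌊y⌋₊ : ℝ) + 1 := this
    _ ≤ ((2 ^ (k + 1) : ℕ) : ℝ) := h2
    _ = (2 : ℝ) ^ (k + 1) := by push_cast; ring

/-- Key 1-dimensional fact: the set of powers of two is porous on the real line. -/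
lemma key_porous (y r : ℝ) (hr : 0 < r) :
    ∃ t : ℝ, |t - y| ≤ r ∧ ∀ n : ℕ, r / 8 ≤ |t - 2 ^ n| := by
  have hpow1 : ∀ n : ℕ, (1 : ℝ) ≤ 2 ^ n := fun n => one_le_pow₀ (by norm_num)
  by_cases hy : y ≤ 1 + 7 * r / 8
  · -- take t = min y (1 - r/8)
    refine ⟨min y (1 - r / 8), ?_, ?_⟩
    · rcases min_cases y (1 - r / 8) with ⟨h, _⟩ | ⟨h, h'⟩ <;>
        rw [h] <;> rw [abs_le] <;> constructor <;> linarith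
    · intro n
      have h1 := hpow1 n
      have ht : min y (1 - r / 8) ≤ 1 - r / 8 := min_le_right _ _
      refine le_abs.mpr (Or.inr ?_)
      linarith
  · push_neg at hy
    obtain ⟨k, hk1, hk2⟩ := dyadic_scale y (by linarith)
    have hk2' : y < 2 * 2 ^ k := by rw [pow_succ] at hk2; linarith
    have hmono_le : ∀ n : ℕ, n ≤ k → (2 : ℝ) ^ n ≤ 2 ^ k := fun n hn =>
      pow_le_pow_right₀ (by norm_num) hn
    have hmono_ge : ∀ n : ℕ, k + 1 ≤ n → (2 : ℝ) * 2 ^ k ≤ 2 ^ n := fun n hn => by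
      calc (2 : ℝ) * 2 ^ k = 2 ^ (k + 1) := by ring
      _ ≤ 2 ^ n := pow_le_pow_right₀ (by norm_num) hn
    by_cases hcase : (2 : ℝ) ^ k ≤ 2 * r
    · -- take t = 3/2 * 2^k  (midpoint of the gap)
      have hkr : r / 4 < (2 : ℝ) ^ k := by linarith
      refine ⟨3 / 2 * 2 ^ k, ?_, ?_⟩
      · rw [abs_le]; constructor <;> linarith
      · intro n
        rcases le_or_gt n k with hn | hn
        · have := hmono_le n hn
          refine le_abs.mpr (Or.inl ?_); linarith
        · have := hmono_ge n hn
          refine le_abs.mpr (Or.inr ?_); linarith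
    · push_neg at hcase
      by_cases hA : y - 2 ^ k < r / 8
      · -- take t = y + r/4
        refine ⟨y + r / 4, ?_, ?_⟩
        · rw [abs_le]; constructor <;> linarith
        · intro n
          rcases le_or_gt n k with hn | hn
          · have := hmono_le n hn
            refine le_abs.mpr (Or.inl ?_); linarith
          · have := hmono_ge n hn
            refine le_abs.mpr (Or.inr ?_); linarith
      · push_neg at hA
        by_cases hB : 2 * 2 ^ k - y < r / 8
        · -- take t = y - r/4
          refine ⟨y - r / 4, ?_, ?_⟩
          · rw [abs_le]; constructor <;> linarith
          · intro n
            rcases le_or_gt n k with hn | hn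
            · have := hmono_le n hn
              refine le_abs.mpr (Or.inl ?_); linarith
            · have := hmono_ge n hn
              refine le_abs.mpr (Or.inr ?_); linarith
        · push_neg at hB
          -- take t = y
          refine ⟨y, ?_, ?_⟩
          · simp [abs_of_nonneg, le_of_lt hr]
          · intro n
            rcases le_or_gt n k with hn | hn
            · have := hmono_le n hn
              refine le_abs.mpr (Or.inl ?_); linarith
            · have := hmono_ge n hn
              refine le_abs.mpr (Or.inr ?_); linarith

/-- The set `E₁ = ℤ + i·{2^n : n ∈ ℕ}` is 8-porous in ℂ. -/
theorem stmt_8 :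
    ∀ z' : ℂ, ∀ r : ℝ, 0 < r →
      ∃ z ∈ Metric.closedBall z' r,
        ∀ w ∈ Metric.ball z (r / 8),
          w ∉ {w : ℂ | ∃ m : ℤ, ∃ n : ℕ, w = (m : ℂ) + (2 ^ n : ℝ) * Complex.I} := by
  intro z' r hr
  obtain ⟨t, ht1, ht2⟩ := key_porous z'.im r hr
  refine ⟨⟨z'.re, t⟩, ?_, ?_⟩
  · rw [Metric.mem_closedBall, Complex.dist_of_re_eq (show (⟨z'.re, t⟩ : ℂ).re = z'.re from rfl)]
    simpa [Real.dist_eq] using ht1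
  · intro w hw hwE
    obtain ⟨m, n, rfl⟩ := hwE
    rw [Metric.mem_ball] at hw
    have him : ((m : ℂ) + ((2 : ℝ) ^ n : ℝ) * Complex.I).im = 2 ^ n := by simp [← Complex.ofReal_pow]
    have hle : |((m : ℂ) + ((2 : ℝ) ^ n : ℝ) * Complex.I).im - t|
        ≤ dist ((m : ℂ) + ((2 : ℝ) ^ n : ℝ) * Complex.I) (⟨z'.re, t⟩ : ℂ) := by
      rw [Complex.dist_eq]
      simpa using Complex.abs_im_le_norm
        ((m : ℂ) + ((2 : ℝ) ^ n : ℝ) * Complex.I - (⟨z'.re, t⟩ : ℂ))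
    rw [him] at hle
    have := ht2 n
    rw [abs_sub_comm] at this
    linarith
end

section
/- Let c ≥ 1 and let E ⊆ ℂ be a set that is c-porous in ℂ and invariant under translation by 1 (i.e., E + 1 = E). Then for every r > 1 there exists a real number y₀ ≥ r + 1 such that the horizontal strip { w ∈ ℂ : y₀ − r < Im w < y₀ + r } is disjoint from E. -/
/-!
Porosity at the point `i((√2 c + 1) r + 1)` with radius `√2 c r` gives an `E`-free disk of
radius `√2 r` whose centre has height at least `r + 1`. That disk contains the open square of
side `2r` around its centre, and since `2r > 1`, the integer translates of this square cover the
whole horizontal strip of height `2r` through the centre; by `1`-periodicity of `E` the strip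
misses `E`.
-/

open Metric

lemma Complex.mem_ball_sqrt_two_mul {z w : ℂ} {s : ℝ} (hre : |w.re - z.re| < s)
    (him : |w.im - z.im| < s) : w ∈ ball z (√2 * s) := by
  have hs : 0 ≤ s := (abs_nonneg _).trans hre.le
  rw [mem_ball, Complex.dist_eq]
  refine lt_of_pow_lt_pow_left₀ 2 (by positivity) ?_
  rw [Complex.sq_norm, Complex.normSq_apply, mul_pow, Real.sq_sqrt zero_le_two]
  simp only [Complex.sub_re, Complex.sub_im]
  nlinarith [sq_lt_sq' (abs_lt.mp hre).1 (abs_lt.mp hre).2,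
    sq_lt_sq' (abs_lt.mp him).1 (abs_lt.mp him).2]

lemma notMem_of_abs_im_sub_lt_of_periodic {E : Set ℂ} (hE : ∀ z : ℂ, z + 1 ∈ E ↔ z ∈ E)
    {z : ℂ} {s : ℝ} (hs : 1 / 2 < s)
    (hsquare : ∀ w : ℂ, |w.re - z.re| < s → |w.im - z.im| < s → w ∉ E)
    {w : ℂ} (him : |w.im - z.im| < s) : w ∉ E := by
  have hper : Function.Periodic (· ∈ E) (1 : ℂ) := fun z => propext (hE z)
  set n : ℤ := round (z.re - w.re)
  have hre : |(w + n).re - z.re| < s :=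
    calc |(w + n).re - z.re| = |(z.re - w.re) - n| := by
          rw [abs_sub_comm, Complex.add_re, Complex.intCast_re]
          ring_nf
      _ ≤ 1 / 2 := abs_sub_round _
      _ < s := hs
  have hmem : w + n ∉ E := hsquare _ hre (by simpa using him)
  have htranslate : (w + n * 1 ∈ E) = (w ∈ E) := hper.int_mul n w
  rw [mul_one] at htranslate
  rwa [htranslate] at hmem

/-- If `E ⊆ ℂ` is `c`-porous and invariant under translation by 1, then for every
`r > 1` there is an `E`-free horizontal strip of height `2r` centered at height
`y₀ ≥ r + 1`. -/
theorem stmt_11 (c : ℝ) (hc : 1 ≤ c) (E : Set ℂ)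
    (hpor : ∀ z' : ℂ, ∀ r : ℝ, 0 < r →
      ∃ z ∈ Metric.closedBall z' r, ∀ w ∈ Metric.ball z (r / c), w ∉ E)
    (hinv : ∀ z : ℂ, z + 1 ∈ E ↔ z ∈ E) :
    ∀ r : ℝ, 1 < r →
      ∃ y₀ : ℝ, r + 1 ≤ y₀ ∧ ∀ w ∈ E, ¬(y₀ - r < w.im ∧ w.im < y₀ + r) := by
  intro r hr
  have hc0 : 0 < c := one_pos.trans_le hc
  obtain ⟨z, hz, hdisk⟩ :=
    hpor (Complex.I * (((√2 * c + 1) * r + 1 : ℝ) : ℂ)) (√2 * r * c) (by positivity)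
  have hheight : r + 1 ≤ z.im := by
    have hdist := mem_closedBall.mp hz
    rw [Complex.dist_eq] at hdist
    have him := (Complex.abs_im_le_norm _).trans hdist
    rw [Complex.sub_im, Complex.mul_im] at him
    simp only [Complex.I_re, Complex.I_im, Complex.ofReal_re, Complex.ofReal_im] at him
    linarith [(abs_le.mp him).1]
  refine ⟨z.im, hheight, fun w hw ⟨hlo, hhi⟩ => ?_⟩
  have hsquare : ∀ v : ℂ, |v.re - z.re| < r → |v.im - z.im| < r → v ∉ E := by
    intro v hre him
    refine hdisk v ?_
    rw [mul_div_cancel_right₀ _ hc0.ne']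
    exact Complex.mem_ball_sqrt_two_mul hre him
  exact notMem_of_abs_im_sub_lt_of_periodic hinv (by linarith) hsquare
    (abs_lt.mpr ⟨by linarith, by linarith⟩) hw
end

section
/- Let c ≥ 1 and let E ⊆ ℂ satisfy: E is c-porous in ℂ, E + 1 = E (invariance under translation by 1), 0 ∈ E, and sup{ Im a : a ∈ E } = +∞. Let g : ℤ → ℂ be any map whose image is exactly E. Then sup_{m ∈ ℤ} |Im g(m) − Im g(m+1)| = +∞; that is, for every R > 0 there exists m ∈ ℤ with |Im g(m) − Im g(m+1)| ≥ R. -/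
/-!
Porosity together with `1`-periodicity produces, arbitrarily high up, a horizontal strip of any
prescribed height containing no point of `E`: a free disk of radius larger than `1/2 + ρ` meets
every horizontal segment of length `1` inside a strip of half-height `ρ` around its centre, and
periodicity transports this to the whole strip. Since `g` hits `0`, below the strip, and points
of `E` above it, some consecutive pair `g m`, `g (m + 1)` lies on opposite sides of the strip.
-/

open Metric

def IsPorous (c : ℝ) (E : Set ℂ) : Prop :=
  ∀ z' : ℂ, ∀ r : ℝ, 0 < r → ∃ z ∈ closedBall z' r, ∀ w ∈ ball z (r / c), w ∉ E

lemma Complex.exists_intCast_sub_mem_ball {w z : ℂ} {ρ : ℝ} (h : |w.im - z.im| ≤ ρ) :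
    ∃ n : ℤ, w - n ∈ ball z (ρ + 1) := by
  refine ⟨round (w.re - z.re), ?_⟩
  have hre : |(w - round (w.re - z.re) - z).re| ≤ 1 / 2 := by
    simpa [sub_right_comm] using abs_sub_round (w.re - z.re)
  have him : |(w - round (w.re - z.re) - z).im| ≤ ρ := by simpa using h
  rw [mem_ball, Complex.dist_eq]
  linarith [Complex.norm_le_abs_re_add_abs_im (w - round (w.re - z.re) - z)]

lemma IsPorous.exists_forall_im_notMem_Icc {c : ℝ} {E : Set ℂ} (hE : IsPorous c E) (hc : 0 < c)
    (hper : Function.Periodic (· ∈ E) (1 : ℂ)) {ρ : ℝ} (hρ : 0 ≤ ρ) (h : ℝ) :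
    ∃ y, h ≤ y ∧ ∀ w ∈ E, w.im ∉ Set.Icc (y - ρ) (y + ρ) := by
  set r := c * (ρ + 1)
  obtain ⟨z, hz, hfree⟩ := hE ((h + r) * Complex.I) r (by positivity)
  have hzim : h ≤ z.im := by
    have := (Complex.abs_im_le_norm _).trans (mem_closedBall_iff_norm.mp hz)
    simp only [Complex.sub_im, Complex.mul_I_im, Complex.add_re, Complex.ofReal_re] at this
    linarith [(abs_le.mp this).1]
  refine ⟨z.im, hzim, fun w hw hstrip => ?_⟩
  obtain ⟨n, hn⟩ := Complex.exists_intCast_sub_mem_ball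
    (show |w.im - z.im| ≤ ρ from
      abs_sub_le_iff.mpr ⟨by linarith [hstrip.2], by linarith [hstrip.1]⟩)
  have hwn : w - n ∈ E := (hper.int_mul n (w - n)).mp (by simpa using hw)
  exact hfree _ (by rwa [mul_div_cancel_left₀ _ hc.ne']) hwn

lemma Int.exists_le_abs_sub_of_forall_notMem_Icc {u : ℤ → ℝ} {a b : ℝ}
    (hu : ∀ m, u m ∉ Set.Icc a b) {m₀ m₁ : ℤ} (h₀ : u m₀ < a) (h₁ : b < u m₁) :
    ∃ m, b - a ≤ |u m - u (m + 1)| := by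
  by_contra! hjump
  have hside : ∀ m, u m < a ∨ b < u m := fun m => by
    simpa only [Set.mem_Icc, not_and_or, not_le] using hu m
  -- Small jumps cannot cross the gap, so "lying below the gap" is `1`-periodic on `ℤ`.
  have hper : Function.Periodic (fun m => u m < a) 1 := fun m => by
    have := abs_lt.mp (hjump m)
    rcases hside m with h | h <;> rcases hside (m + 1) with h' | h' <;>
      simp only [eq_iff_iff] <;> constructor <;> intro <;> linarith
  have := (hper.int_mul (m₁ - m₀)) m₀
  simp only [mul_one, Int.cast_id, add_sub_cancel, eq_iff_iff] at this
  linarith [this.mpr h₀, abs_nonneg (u m₀ - u (m₀ + 1)), hjump m₀]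

/-- Lemma 4.2: if `E ⊆ ℂ` is `c`-porous, invariant under translation by 1, contains `0`,
and has imaginary parts unbounded above, then for any surjection `g : ℤ → ℂ` onto `E`,
the imaginary-part jumps between consecutive values of `g` are unbounded. -/
theorem stmt_12 (c : ℝ) (hc : 1 ≤ c) (E : Set ℂ)
    (hpor : ∀ z' : ℂ, ∀ r : ℝ, 0 < r →
      ∃ z ∈ Metric.closedBall z' r, ∀ w ∈ Metric.ball z (r / c), w ∉ E)
    (hinv : ∀ z : ℂ, z + 1 ∈ E ↔ z ∈ E)
    (h0 : (0 : ℂ) ∈ E)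
    (hsup : ∀ R : ℝ, ∃ a ∈ E, R < a.im)
    (g : ℤ → ℂ) (hg : Set.range g = E) :
    ∀ R : ℝ, 0 < R → ∃ m : ℤ, R ≤ |(g m).im - (g (m + 1)).im| := by
  intro R hR
  have hper : Function.Periodic (· ∈ E) (1 : ℂ) := fun z => propext (hinv z)
  obtain ⟨y, hy, hstrip⟩ :=
    IsPorous.exists_forall_im_notMem_Icc hpor (by linarith) hper hR.le (R + 1)
  obtain ⟨m₀, hm₀⟩ : 0 ∈ Set.range g := hg ▸ h0
  obtain ⟨a, ha, ha_im⟩ := hsup (y + R)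
  obtain ⟨m₁, rfl⟩ : a ∈ Set.range g := hg ▸ ha
  have hgap : ∀ m, (g m).im ∉ Set.Icc (y - R) (y + R) :=
    fun m => hstrip (g m) (hg ▸ Set.mem_range_self m)
  obtain ⟨m, hm⟩ := Int.exists_le_abs_sub_of_forall_notMem_Icc hgap
    (m₀ := m₀) (by rw [hm₀, Complex.zero_im]; linarith) ha_im
  exact ⟨m, by linarith⟩
end
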